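/- arXiv:2605.19343 — 2 statements merged into one kernel-verified Lean document; each statement's English description precedes it below -/
import Mathlib

section
/- Let μ₁, μ₂ be real numbers and v₁, v₂ positive real numbers. Let h : ℝ → ℝ be strictly monotone increasing and surjective, and suppose the pushforward of the Gaussian measure gaussianReal μ₁ v₁ under h equals gaussianReal μ₂ v₂. Then h is affine with the explicit form h(x) = μ₂ + √(v₂/v₁) · (x − μ₁) for all x. -/
open MeasureTheory ProbabilityTheory
open scoped NNReal

lemma gauss_Iic_inj (μ : ℝ) {v : ℝ≥0} (hv : v ≠ 0) {a b : ℝ}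
    (hab : gaussianReal μ v (Set.Iic a) = gaussianReal μ v (Set.Iic b)) : a = b := by
  by_contra hne
  wlog hlt : a < b generalizing a b
  · exact this hab.symm (Ne.symm hne) (lt_of_le_of_ne (not_lt.mp hlt) (Ne.symm hne))
  have hdisj : Disjoint (Set.Iic a) (Set.Ioc a b) := by
    simp [Set.disjoint_left]
    intro x hx; intro h'; exact absurd hx (not_le.mpr h')
  have hunion : Set.Iic a ∪ Set.Ioc a b = Set.Iic b := Set.Iic_union_Ioc_eq_Iic hlt.le
  have hmeas : gaussianReal μ v (Set.Iic b)
      = gaussianReal μ v (Set.Iic a) + gaussianReal μ v (Set.Ioc a b) := by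
    rw [← hunion, measure_union hdisj measurableSet_Ioc]
  have h0 : gaussianReal μ v (Set.Ioc a b) = 0 := by
    rw [hab] at hmeas
    have h' : gaussianReal μ v (Set.Iic b) + 0
        = gaussianReal μ v (Set.Iic b) + gaussianReal μ v (Set.Ioc a b) := by
      rw [add_zero]; exact hmeas
    exact ((ENNReal.add_right_inj
      (measure_ne_top (gaussianReal μ v) (Set.Iic b))).mp h').symm
  have := gaussianReal_absolutelyContinuous' μ hv h0
  rw [Real.volume_Ioc] at this
  exact absurd this (by simp [ENNReal.ofReal_eq_zero, hlt])

/-- One-dimensional case of Lemma A.4: a strictly monotone surjection pushing one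
non-degenerate Gaussian measure to another must be the explicit affine map
`h x = μ₂ + √(v₂ / v₁) (x - μ₁)`. -/
theorem affine_of_map_gaussianReal_eq_gaussianReal
    (μ₁ μ₂ : ℝ) (v₁ v₂ : ℝ≥0) (hv₁ : 0 < v₁) (hv₂ : 0 < v₂)
    (h : ℝ → ℝ) (hmono : StrictMono h) (hsurj : Function.Surjective h)
    (hmap : Measure.map h (gaussianReal μ₁ v₁) = gaussianReal μ₂ v₂) :
    ∀ x : ℝ, h x = μ₂ + Real.sqrt ((v₂ : ℝ) / (v₁ : ℝ)) * (x - μ₁) := by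
  set c : ℝ := Real.sqrt ((v₂ : ℝ) / (v₁ : ℝ)) with hc
  have hcpos : 0 < c := Real.sqrt_pos.mpr (by positivity)
  set g : ℝ → ℝ := fun x => μ₂ + c * (x - μ₁) with hg
  have hgmap : Measure.map g (gaussianReal μ₁ v₁) = gaussianReal μ₂ v₂ := by
    have h1 : Measure.map (fun x => c * x) (gaussianReal μ₁ v₁)
        = gaussianReal (c * μ₁) v₂ := by
      rw [gaussianReal_map_const_mul]
      congr 1
      apply NNReal.coe_injective
      push_cast
      rw [hc, Real.sq_sqrt (by positivity)]
      field_simp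
    have h2 : Measure.map (fun x => c * x + (μ₂ - c * μ₁)) (gaussianReal μ₁ v₁)
        = gaussianReal μ₂ v₂ := by
      have : (fun x => c * x + (μ₂ - c * μ₁))
          = (fun y => y + (μ₂ - c * μ₁)) ∘ (fun x => c * x) := rfl
      rw [this, ← Measure.map_map (by fun_prop) (by fun_prop), h1,
        gaussianReal_map_add_const]
      ring_nf
    have : g = fun x => c * x + (μ₂ - c * μ₁) := by funext x; simp [hg]; ring
    rw [this]; exact h2
  intro x
  have hhmeas : Measurable h := hmono.monotone.measurable
  have hgmeas : Measurable g := by fun_prop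
  have hpre_h : h ⁻¹' Set.Iic (h x) = Set.Iic x := by
    ext y; simp [hmono.le_iff_le]
  have hpre_g : g ⁻¹' Set.Iic (g x) = Set.Iic x := by
    ext y
    simp only [Set.mem_preimage, Set.mem_Iic, hg]
    constructor
    · intro hy; nlinarith
    · intro hy; nlinarith
  have e1 : gaussianReal μ₂ v₂ (Set.Iic (h x)) = gaussianReal μ₁ v₁ (Set.Iic x) := by
    rw [← hmap, Measure.map_apply hhmeas measurableSet_Iic, hpre_h]
  have e2 : gaussianReal μ₂ v₂ (Set.Iic (g x)) = gaussianReal μ₁ v₁ (Set.Iic x) := by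
    rw [← hgmap, Measure.map_apply hgmeas measurableSet_Iic, hpre_g]
  exact gauss_Iic_inj μ₂ hv₂.ne' (e1.trans e2.symm)
end

section
/- Let μ and ν be nonzero σ-finite Borel measures on (Fin n → ℝ), each assigning strictly positive measure to every nonempty open set, let F : (Fin n → ℝ) → ℝ be differentiable, and suppose there is a point x⋆ at which the Fréchet derivative of F is nonzero. Then (μ.prod ν) {(x, y) | F(x) ≠ F(y)} > 0. -/
open MeasureTheory

/-- The contradiction step in the proof of Lemma A.3: if a differentiable map `F` has a
nonzero derivative at some point, then two independent draws from nonzero σ-finite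
full-support measures yield different values of `F` with positive probability. -/
theorem prod_measure_ne_pos_of_fderiv_ne_zero
    (n : ℕ) (μ ν : Measure (Fin n → ℝ)) [SigmaFinite μ] [SigmaFinite ν]
    [μ.IsOpenPosMeasure] [ν.IsOpenPosMeasure] (hμ : μ ≠ 0) (hν : ν ≠ 0)
    (F : (Fin n → ℝ) → ℝ) (hF : Differentiable ℝ F)
    (x' : Fin n → ℝ) (hx' : fderiv ℝ F x' ≠ 0) :
    0 < (μ.prod ν) {p : (Fin n → ℝ) × (Fin n → ℝ) | F p.1 ≠ F p.2} := by
  -- F is not constant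
  have hnc : ∃ a b, F a ≠ F b := by
    by_contra h
    push_neg at h
    have : F = fun _ => F x' := funext fun a => h a x'
    apply hx'
    rw [this]
    exact fderiv_const_apply (F x')
  obtain ⟨a, b, hab⟩ := hnc
  wlog hlt : F a < F b generalizing a b
  · exact this b a hab.symm (lt_of_le_of_ne (not_lt.mp hlt) hab.symm)
  set c := (F a + F b) / 2 with hc
  have hUopen : IsOpen {x | F x < c} := isOpen_lt hF.continuous continuous_const
  have hVopen : IsOpen {x | c < F x} := isOpen_lt continuous_const hF.continuous
  have hUne : ({x | F x < c} : Set (Fin n → ℝ)).Nonempty := ⟨a, by simp [hc]; linarith⟩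
  have hVne : ({x | c < F x} : Set (Fin n → ℝ)).Nonempty := ⟨b, by simp [hc]; linarith⟩
  have hμU : 0 < μ {x | F x < c} := hUopen.measure_pos μ hUne
  have hνV : 0 < ν {x | c < F x} := hVopen.measure_pos ν hVne
  have hsub : ({x | F x < c} ×ˢ {x | c < F x}) ⊆
      {p : (Fin n → ℝ) × (Fin n → ℝ) | F p.1 ≠ F p.2} := by
    rintro ⟨x, y⟩ ⟨hx, hy⟩
    exact ne_of_lt (lt_trans hx hy)
  calc 0 < μ {x | F x < c} * ν {x | c < F x} := ENNReal.mul_pos hμU.ne' hνV.ne'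
    _ = (μ.prod ν) ({x | F x < c} ×ˢ {x | c < F x}) := (Measure.prod_prod _ _).symm
    _ ≤ _ := measure_mono hsub
end
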